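/- Every perfect positive definite quadratic form Q in d variables with λ(Q) = 1 is arithmetically equivalent to a form Q' with trace Q' ≤ d · (4/3)^{d(d−1)/2}. -/

import Mathlib

open Matrix

/-- The real vector corresponding to an integral vector. -/
def castVec {d : ℕ} (x : Fin d → ℤ) : Fin d → ℝ := fun i => (x i : ℝ)

/-- Evaluation `Q[x] = xᵗ Q x` of a quadratic form at an integral vector. -/
def qeval {d : ℕ} (Q : Matrix (Fin d) (Fin d) ℝ) (x : Fin d → ℤ) : ℝ :=
  castVec x ⬝ᵥ Q.mulVec (castVec x)

/-- The real matrix corresponding to an integral matrix. -/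
def castMat {d : ℕ} (U : Matrix (Fin d) (Fin d) ℤ) : Matrix (Fin d) (Fin d) ℝ :=
  U.map fun z => (z : ℝ)

/-- `Q` is a perfect positive definite quadratic form with arithmetical minimum
`lam`. -/
def IsPerfect {d : ℕ} (Q : Matrix (Fin d) (Fin d) ℝ) (lam : ℝ) : Prop :=
  Q.PosDef ∧ IsLeast {r : ℝ | ∃ x : Fin d → ℤ, x ≠ 0 ∧ qeval Q x = r} lam ∧
    ∀ Q' : Matrix (Fin d) (Fin d) ℝ, Q'.IsSymm →
      (∀ x : Fin d → ℤ, qeval Q x = lam → qeval Q' x = lam) → Q' = Q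

/-!
The minimal vectors of a perfect form span `ℝ^d`: otherwise `Q + w wᵀ`, for a nonzero `w`
orthogonal to all of them, would take the same values on them.

We then induct on `d` under the weaker hypothesis that the integral vectors of `Q`-length at most
`1` span `ℝ^d`. A nonzero such vector is a multiple of a primitive vector, which a unimodular
change of variables makes the first basis vector, so that `Q 0 0 ≤ 1`. Writing
`Q[(c, t)] = Q 0 0 (c + ℓ t)² + Q̄[t]` with `Q̄` the Schur complement of `Q 0 0`, the tails of
the short vectors are short for `Q̄` and still span. A basis found for `Q̄` lifts to a basis for
`Q` by choosing each first coordinate `c` as the integer nearest to `-ℓ t`, which costs at most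
`Q 0 0 / 4 ≤ 1 / 4` per column. Hence the trace is at most
`d + C(d, 2) / 4 ≤ d (4/3)^(d(d-1)/2)`.
-/

section IntegralForms
variable {d : ℕ}

def conjInt (U : Matrix (Fin d) (Fin d) ℤ) (Q : Matrix (Fin d) (Fin d) ℝ) :
    Matrix (Fin d) (Fin d) ℝ :=
  (castMat U)ᵀ * Q * castMat U

lemma castMat_mul (A B : Matrix (Fin d) (Fin d) ℤ) :
    castMat (A * B) = castMat A * castMat B :=
  Matrix.map_mul (f := Int.castRingHom ℝ)

lemma IsUnit.castMat {U : Matrix (Fin d) (Fin d) ℤ} (hU : IsUnit U) : IsUnit (castMat U) :=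
  hU.map (Int.castRingHom ℝ).mapMatrix

lemma castVec_mulVec (U : Matrix (Fin d) (Fin d) ℤ) (x : Fin d → ℤ) :
    castVec (U *ᵥ x) = castMat U *ᵥ castVec x := by
  ext i
  simp [castVec, castMat, mulVec, dotProduct]

lemma castVec_smul (k : ℤ) (x : Fin d → ℤ) : castVec (k • x) = (k : ℝ) • castVec x := by
  ext i
  simp [castVec]

lemma castVec_zero : castVec (0 : Fin d → ℤ) = 0 := by
  ext i
  simp [castVec]

lemma castVec_single (j : Fin d) : castVec (Pi.single j 1) = Pi.single j 1 := by
  ext i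
  by_cases h : i = j <;> simp [castVec, h]

lemma qeval_conjInt (U : Matrix (Fin d) (Fin d) ℤ) (Q : Matrix (Fin d) (Fin d) ℝ)
    (x : Fin d → ℤ) : qeval (conjInt U Q) x = qeval Q (U *ᵥ x) := by
  rw [qeval, qeval, conjInt, castVec_mulVec, ← mulVec_mulVec, ← mulVec_mulVec,
    dotProduct_mulVec _ (castMat U)ᵀ, vecMul_transpose]

lemma qeval_smul (Q : Matrix (Fin d) (Fin d) ℝ) (k : ℤ) (x : Fin d → ℤ) :
    qeval Q (k • x) = (k : ℝ) ^ 2 * qeval Q x := by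
  rw [qeval, qeval, castVec_smul, mulVec_smul, smul_dotProduct, dotProduct_smul, smul_eq_mul,
    smul_eq_mul]
  ring

lemma qeval_single (Q : Matrix (Fin d) (Fin d) ℝ) (j : Fin d) :
    qeval Q (Pi.single j 1) = Q j j := by
  simp [qeval, castVec_single]

lemma conjInt_mul (A B : Matrix (Fin d) (Fin d) ℤ) (Q : Matrix (Fin d) (Fin d) ℝ) :
    conjInt (A * B) Q = conjInt B (conjInt A Q) := by
  simp only [conjInt, castMat_mul, transpose_mul, Matrix.mul_assoc]

lemma trace_conjInt (U : Matrix (Fin d) (Fin d) ℤ) (Q : Matrix (Fin d) (Fin d) ℝ) :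
    (conjInt U Q).trace = ∑ j, qeval Q (U.col j) := by
  simp_rw [trace, diag, ← qeval_single, qeval_conjInt, mulVec_single_one]

lemma posDef_conjInt {Q : Matrix (Fin d) (Fin d) ℝ} (hQ : Q.PosDef)
    {U : Matrix (Fin d) (Fin d) ℤ} (hU : IsUnit U) : (conjInt U Q).PosDef := by
  simpa [conjInt, conjTranspose_eq_transpose_of_trivial] using
    hQ.conjTranspose_mul_mul_same (mulVec_injective_of_isUnit hU.castMat)

lemma Matrix.PosDef.qeval_nonneg {Q : Matrix (Fin d) (Fin d) ℝ} (hQ : Q.PosDef)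
    (x : Fin d → ℤ) : 0 ≤ qeval Q x := by
  simpa [qeval] using hQ.posSemidef.dotProduct_mulVec_nonneg (castVec x)

end IntegralForms

section Schur
variable {e : ℕ} {Q : Matrix (Fin (e + 1)) (Fin (e + 1)) ℝ}

noncomputable def schur (Q : Matrix (Fin (e + 1)) (Fin (e + 1)) ℝ) : Matrix (Fin e) (Fin e) ℝ :=
  Q.submatrix Fin.succ Fin.succ -
    (Q 0 0)⁻¹ • vecMulVec (Fin.tail (Q.col 0)) (Fin.tail (Q.col 0))

lemma Matrix.IsSymm.cons_dotProduct_mulVec_cons (hQ : Q.IsSymm) (c : ℝ) (t : Fin e → ℝ) :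
    Fin.cons c t ⬝ᵥ Q *ᵥ Fin.cons c t =
      Q 0 0 * c ^ 2 + 2 * c * (Fin.tail (Q.col 0) ⬝ᵥ t) +
        t ⬝ᵥ Q.submatrix Fin.succ Fin.succ *ᵥ t := by
  have hsymm : ∀ j : Fin e, Q 0 j.succ = Q j.succ 0 := fun j => hQ.apply j.succ 0
  have hcross : ∑ i, t i * (Q i.succ 0 * c) = c * ∑ i, Q i.succ 0 * t i := by
    rw [Finset.mul_sum]
    exact Finset.sum_congr rfl fun _ _ => by ring
  simp only [dotProduct, mulVec, Fin.sum_univ_succ, Fin.cons_zero, Fin.cons_succ,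
    submatrix_apply, Fin.tail, col_apply, hsymm, mul_add, Finset.sum_add_distrib, hcross]
  ring

lemma dotProduct_schur_mulVec (t : Fin e → ℝ) :
    t ⬝ᵥ schur Q *ᵥ t =
      t ⬝ᵥ Q.submatrix Fin.succ Fin.succ *ᵥ t -
        (Fin.tail (Q.col 0) ⬝ᵥ t) ^ 2 / Q 0 0 := by
  rw [schur, sub_mulVec, smul_mulVec, vecMulVec_mulVec, dotProduct_sub, dotProduct_smul,
    op_smul_eq_smul, dotProduct_smul, smul_eq_mul, smul_eq_mul,
    dotProduct_comm t (Fin.tail (Q.col 0))]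
  ring

lemma Matrix.IsSymm.cons_dotProduct_mulVec_cons_eq_schur (hQ : Q.IsSymm) (ha : Q 0 0 ≠ 0)
    (c : ℝ) (t : Fin e → ℝ) :
    Fin.cons c t ⬝ᵥ Q *ᵥ Fin.cons c t =
      Q 0 0 * (c + Fin.tail (Q.col 0) ⬝ᵥ t / Q 0 0) ^ 2 + t ⬝ᵥ schur Q *ᵥ t := by
  rw [hQ.cons_dotProduct_mulVec_cons, dotProduct_schur_mulVec]
  field_simp
  ring

lemma posDef_schur (hQ : Q.PosDef) : (schur Q).PosDef := by
  have hsymm := isHermitian_iff_isSymm.1 hQ.isHermitian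
  refine posDef_iff_dotProduct_mulVec.2 ⟨isHermitian_iff_isSymm.2 ?_, fun t ht => ?_⟩
  · refine IsSymm.ext fun i j => ?_
    simp [schur, hsymm.apply, vecMulVec_apply, mul_comm]
  · set c := -(Fin.tail (Q.col 0) ⬝ᵥ t / Q 0 0)
    have hct : (Fin.cons c t : Fin (e + 1) → ℝ) ≠ 0 := fun h =>
      ht (funext fun i => by simpa using congrFun h i.succ)
    have hpos := hQ.dotProduct_mulVec_pos hct
    rw [star_trivial, hsymm.cons_dotProduct_mulVec_cons_eq_schur hQ.diag_pos.ne'] at hpos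
    simpa [c] using hpos

lemma castVec_cons (c : ℤ) (t : Fin e → ℤ) :
    castVec (Fin.cons c t : Fin (e + 1) → ℤ) = Fin.cons (c : ℝ) (castVec t) := by
  ext i
  refine Fin.cases ?_ (fun i => ?_) i <;> simp [castVec]

lemma Matrix.IsSymm.qeval_cons (hQ : Q.IsSymm) (ha : Q 0 0 ≠ 0) (c : ℤ) (t : Fin e → ℤ) :
    qeval Q (Fin.cons c t) =
      Q 0 0 * (c + Fin.tail (Q.col 0) ⬝ᵥ castVec t / Q 0 0) ^ 2 + qeval (schur Q) t := by
  rw [qeval, castVec_cons, hQ.cons_dotProduct_mulVec_cons_eq_schur ha]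
  rfl

lemma qeval_schur_tail_le (hQ : Q.PosDef) (x : Fin (e + 1) → ℤ) :
    qeval (schur Q) (Fin.tail x) ≤ qeval Q x := by
  conv_rhs => rw [← Fin.cons_self_tail x]
  rw [(isHermitian_iff_isSymm.1 hQ.isHermitian).qeval_cons hQ.diag_pos.ne']
  exact le_add_of_nonneg_left (mul_nonneg hQ.diag_pos.le (sq_nonneg _))

/-- The block matrix `[[1, m], [0, Ub]]`. -/
def liftMat (m : Fin e → ℤ) (Ub : Matrix (Fin e) (Fin e) ℤ) :
    Matrix (Fin (e + 1)) (Fin (e + 1)) ℤ :=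
  of (Fin.cons (Fin.cons 1 m) fun i => Fin.cons 0 (Ub i))

lemma liftMat_col_zero (m : Fin e → ℤ) (Ub : Matrix (Fin e) (Fin e) ℤ) :
    (liftMat m Ub).col 0 = Fin.cons 1 0 := by
  ext i
  refine Fin.cases ?_ (fun i => ?_) i <;> simp [liftMat]

lemma liftMat_col_succ (m : Fin e → ℤ) (Ub : Matrix (Fin e) (Fin e) ℤ) (j : Fin e) :
    (liftMat m Ub).col j.succ = Fin.cons (m j) (Ub.col j) := by
  ext i
  refine Fin.cases ?_ (fun i => ?_) i <;> simp [liftMat]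

lemma det_liftMat (m : Fin e → ℤ) (Ub : Matrix (Fin e) (Fin e) ℤ) :
    (liftMat m Ub).det = Ub.det := by
  rw [det_succ_column_zero, Fin.sum_univ_succ]
  simp [liftMat, submatrix]
  rfl

lemma exists_isUnit_trace_conjInt_le_schur (hQ : Q.IsSymm) (ha : 0 < Q 0 0)
    {Ub : Matrix (Fin e) (Fin e) ℤ} (hUb : IsUnit Ub) :
    ∃ U, IsUnit U ∧
      (conjInt U Q).trace ≤ Q 0 0 * (1 + e / 4) + (conjInt Ub (schur Q)).trace := by
  set r : Fin e → ℝ := fun j => Fin.tail (Q.col 0) ⬝ᵥ castVec (Ub.col j) / Q 0 0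
  refine ⟨liftMat (fun j => -round (r j)) Ub, ?_, ?_⟩
  · rw [isUnit_iff_isUnit_det, det_liftMat, ← isUnit_iff_isUnit_det]
    exact hUb
  have hcol : ∀ j, qeval Q ((liftMat (fun j => -round (r j)) Ub).col j.succ) ≤
      Q 0 0 / 4 + qeval (schur Q) (Ub.col j) := by
    intro j
    rw [liftMat_col_succ, hQ.qeval_cons ha.ne']
    have hround : (r j - round (r j)) ^ 2 ≤ 1 / 4 := by
      nlinarith [abs_sub_round (r j), sq_abs (r j - round (r j)), abs_nonneg (r j - round (r j))]
    push_cast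
    nlinarith
  rw [trace_conjInt, trace_conjInt, Fin.sum_univ_succ, liftMat_col_zero,
    hQ.qeval_cons ha.ne']
  calc _ ≤ Q 0 0 + ∑ j : Fin e, (Q 0 0 / 4 + qeval (schur Q) (Ub.col j)) := by
        gcongr with j
        · simp [castVec_zero, qeval]
        · exact hcol j
    _ = _ := by
      rw [Finset.sum_add_distrib, Finset.sum_const, Finset.card_univ, Fintype.card_fin,
        nsmul_eq_mul]
      ring

end Schur

theorem Module.Basis.exists_basis_smul_eq {R M ι : Type*} [CommRing R] [IsDomain R]
    [IsPrincipalIdealRing R] [AddCommGroup M] [Module R M] [Finite ι] [DecidableEq ι]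
    (b : Module.Basis ι R M) (i₀ : ι) (v : M) :
    ∃ (b' : Module.Basis ι R M) (k : R), v = k • b' i₀ := by
  obtain ⟨n, snf⟩ := Submodule.smithNormalForm b (R ∙ v)
  have hn : n ≤ 1 := by
    simpa [Module.finrank_eq_card_basis snf.bN] using finrank_span_le_card (R := R) {v}
  obtain ⟨c, hc⟩ := snf.bN.mem_submodule_iff.1 (Submodule.mem_span_singleton_self v)
  rw [Finsupp.sum_fintype _ _ (by simp)] at hc
  interval_cases n
  · exact ⟨b, 0, by simpa using hc⟩
  · refine ⟨snf.bM.reindex (Equiv.swap (snf.f 0) i₀), c 0 * snf.a 0, ?_⟩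
    simpa [snf.snf, mul_smul] using hc

theorem exists_isUnit_smul_col_eq {R ι : Type*} [CommRing R] [IsDomain R]
    [IsPrincipalIdealRing R] [Fintype ι] [DecidableEq ι] (i₀ : ι) (v : ι → R) :
    ∃ W : Matrix ι ι R, IsUnit W ∧ ∃ k : R, v = k • W.col i₀ := by
  obtain ⟨b, k, rfl⟩ := (Pi.basisFun R ι).exists_basis_smul_eq i₀ v
  refine ⟨(Pi.basisFun R ι).toMatrix b,
    IsUnit.of_mul_eq_one _ (Module.Basis.toMatrix_mul_toMatrix_flip _ _), k, ?_⟩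
  ext i
  simp [Module.Basis.toMatrix_apply]

lemma exists_isUnit_conjInt_zero_zero_le {e : ℕ} {Q : Matrix (Fin (e + 1)) (Fin (e + 1)) ℝ}
    (hQ : Q.PosDef) {v : Fin (e + 1) → ℤ} (hv : v ≠ 0) :
    ∃ W, IsUnit W ∧ conjInt W Q 0 0 ≤ qeval Q v := by
  obtain ⟨W, hW, k, rfl⟩ := exists_isUnit_smul_col_eq 0 v
  have hk : (1 : ℝ) ≤ (k : ℝ) ^ 2 := by
    have : k ≠ 0 := by rintro rfl; simp at hv
    exact_mod_cast (one_le_sq_iff_one_le_abs _).2 (Int.one_le_abs this)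
  refine ⟨W, hW, ?_⟩
  rw [← qeval_single (conjInt W Q), qeval_conjInt, mulVec_single_one, qeval_smul]
  exact le_mul_of_one_le_left (hQ.qeval_nonneg _) hk

def IsShortSpanning {d : ℕ} (Q : Matrix (Fin d) (Fin d) ℝ) (S : Set (Fin d → ℤ)) : Prop :=
  (∀ x ∈ S, qeval Q x ≤ 1) ∧ Submodule.span ℝ (castVec '' S) = ⊤

namespace IsShortSpanning

lemma exists_ne_zero {e : ℕ} {Q : Matrix (Fin (e + 1)) (Fin (e + 1)) ℝ}
    {S : Set (Fin (e + 1) → ℤ)} (h : IsShortSpanning Q S) : ∃ x ∈ S, x ≠ 0 := by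
  by_contra! hS
  have : Submodule.span ℝ (castVec '' S) = ⊥ :=
    Submodule.span_eq_bot.2 (by rintro _ ⟨x, hx, rfl⟩; rw [hS x hx, castVec_zero])
  exact top_ne_bot (h.2.symm.trans this)

lemma conj {d : ℕ} {Q : Matrix (Fin d) (Fin d) ℝ} {S : Set (Fin d → ℤ)}
    (h : IsShortSpanning Q S) {W : Matrix (Fin d) (Fin d) ℤ} (hW : IsUnit W) :
    IsShortSpanning (conjInt W Q) ((W⁻¹ *ᵥ ·) '' S) := by
  have hWW : W * W⁻¹ = 1 := mul_nonsing_inv W ((isUnit_iff_isUnit_det W).1 hW)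
  constructor
  · rintro _ ⟨x, hx, rfl⟩
    rw [qeval_conjInt, mulVec_mulVec, hWW, one_mulVec]
    exact h.1 x hx
  · have himage :
        castVec '' ((W⁻¹ *ᵥ ·) '' S) = (castMat W⁻¹).mulVecLin '' (castVec '' S) := by
      simp only [Set.image_image, mulVecLin_apply, castVec_mulVec]
    have hsurj : Function.Surjective (castMat W⁻¹).mulVecLin :=
      mulVec_surjective_iff_isUnit.2 (isUnit_nonsing_inv_iff.2 hW).castMat
    rw [himage, Submodule.span_image, h.2, Submodule.map_top, LinearMap.range_eq_top.2 hsurj]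

lemma tail {e : ℕ} {Q : Matrix (Fin (e + 1)) (Fin (e + 1)) ℝ} {S : Set (Fin (e + 1) → ℤ)}
    (h : IsShortSpanning Q S) (hQ : Q.PosDef) : IsShortSpanning (schur Q) (Fin.tail '' S) := by
  constructor
  · rintro _ ⟨x, hx, rfl⟩
    exact (qeval_schur_tail_le hQ x).trans (h.1 x hx)
  · have himage : castVec '' (Fin.tail '' S) =
        LinearMap.funLeft ℝ ℝ Fin.succ '' (castVec '' S) := by
      simp only [Set.image_image]
      rfl
    rw [himage, Submodule.span_image, h.2, Submodule.map_top, LinearMap.range_eq_top.2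
      (LinearMap.funLeft_surjective_of_injective ℝ ℝ _ (Fin.succ_injective e))]

end IsShortSpanning

theorem IsShortSpanning.exists_isUnit_trace_conjInt_le {d : ℕ} {Q : Matrix (Fin d) (Fin d) ℝ}
    (hQ : Q.PosDef) {S : Set (Fin d → ℤ)} (hS : IsShortSpanning Q S) :
    ∃ U, IsUnit U ∧ (conjInt U Q).trace ≤ d + (d.choose 2 : ℝ) / 4 := by
  induction d with
  | zero => exact ⟨1, isUnit_one, by simp [trace]⟩
  | succ e ih =>
    obtain ⟨v, hvS, hv⟩ := hS.exists_ne_zero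
    obtain ⟨W, hW, hW00⟩ := exists_isUnit_conjInt_zero_zero_le hQ hv
    have hQ₁ := posDef_conjInt hQ hW
    obtain ⟨Ub, hUb, hUbtr⟩ := ih (posDef_schur hQ₁) ((hS.conj hW).tail hQ₁)
    obtain ⟨U, hU, hUtr⟩ := exists_isUnit_trace_conjInt_le_schur
      (isHermitian_iff_isSymm.1 hQ₁.isHermitian) hQ₁.diag_pos hUb
    refine ⟨W * U, hW.mul hU, ?_⟩
    rw [conjInt_mul]
    calc _ ≤ _ := hUtr
      _ ≤ 1 * (1 + e / 4) + (e + (e.choose 2 : ℝ) / 4) := by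
        gcongr
        exact hW00.trans (hS.1 v hvS)
      _ = _ := by
        push_cast [Nat.choose_succ_succ', Nat.choose_one_right]
        ring

lemma IsPerfect.span_castVec_eq_top {d : ℕ} {Q : Matrix (Fin d) (Fin d) ℝ} {lam : ℝ}
    (hQ : IsPerfect Q lam) : Submodule.span ℝ (castVec '' {x | qeval Q x = lam}) = ⊤ := by
  by_contra hne
  obtain ⟨f, hf, hfS⟩ := Submodule.exists_dual_map_eq_bot_of_lt_top (lt_top_iff_ne_top.2 hne)
    inferInstance
  set w : Fin d → ℝ := fun i => f (Pi.single i 1)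
  have hfw : ∀ x, f x = w ⬝ᵥ x := fun x => by
    conv_lhs => rw [← Finset.univ_sum_single x]
    simp only [map_sum, dotProduct]
    refine Finset.sum_congr rfl fun i _ => ?_
    rw [mul_comm, ← smul_eq_mul, ← map_smul, ← Pi.single_smul', smul_eq_mul, mul_one]
  have hsymm : (Q + vecMulVec w w).IsSymm :=
    (isHermitian_iff_isSymm.1 hQ.1.isHermitian).add (transpose_vecMulVec w w)
  have hmin : ∀ x, qeval Q x = lam → qeval (Q + vecMulVec w w) x = lam := fun x hx => by
    have hfx : f (castVec x) ∈ (Submodule.span ℝ (castVec '' {x | qeval Q x = lam})).map f :=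
      Submodule.mem_map_of_mem (Submodule.subset_span ⟨x, hx, rfl⟩)
    rw [hfS, Submodule.mem_bot, hfw] at hfx
    rw [qeval, add_mulVec, dotProduct_add, vecMulVec_mulVec, op_smul_eq_smul, dotProduct_smul,
      dotProduct_comm _ w, hfx, zero_smul, add_zero]
    exact hx
  have hw : vecMulVec w w = 0 := by simpa using hQ.2.2 _ hsymm hmin
  have hw0 : w = 0 := funext fun i => mul_self_eq_zero.1 (congrFun (congrFun hw i) i)
  exact hf (LinearMap.ext fun x => by rw [hfw, hw0, zero_dotProduct, LinearMap.zero_apply])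

lemma add_choose_two_div_four_le (d : ℕ) :
    (d : ℝ) + (d.choose 2 : ℝ) / 4 ≤ d * (4 / 3 : ℝ) ^ (d * (d - 1) / 2) := by
  rw [← Nat.choose_two_right]
  set n := d.choose 2
  have hbernoulli : 1 + n * (1 / 3 : ℝ) ≤ (4 / 3) ^ n := by
    have := one_add_mul_le_pow (a := (1 / 3 : ℝ)) (by norm_num) n
    norm_num at this ⊢
    linarith
  have hn : (n : ℝ) ≤ d * n := by
    rcases d with _ | d
    · simp [n]
    · exact le_mul_of_one_le_left (by positivity) (by simp)
  nlinarith

theorem stmt10_general (d : ℕ) (Q : Matrix (Fin d) (Fin d) ℝ)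
    (hQ : IsPerfect Q 1) :
    ∃ U : Matrix (Fin d) (Fin d) ℤ, (U.det = 1 ∨ U.det = -1) ∧
      ((castMat U)ᵀ * Q * castMat U).trace ≤ d * (4 / 3 : ℝ) ^ (d * (d - 1) / 2) := by
  have hS : IsShortSpanning Q {x | qeval Q x = 1} := ⟨fun _ hx => hx.le, hQ.span_castVec_eq_top⟩
  obtain ⟨U, hU, htr⟩ := hS.exists_isUnit_trace_conjInt_le hQ.1
  exact ⟨U, Int.isUnit_iff.1 ((isUnit_iff_isUnit_det U).1 hU),
    htr.trans (add_choose_two_div_four_le d)⟩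

/-- Every perfect positive definite quadratic form with arithmetical minimum `1`
is arithmetically equivalent to a form of trace at most `d · (4/3)^(d(d-1)/2)`. -/
theorem stmt10 (d : ℕ) (hd : 1 ≤ d) (Q : Matrix (Fin d) (Fin d) ℝ)
    (hQ : IsPerfect Q 1) :
    ∃ U : Matrix (Fin d) (Fin d) ℤ, (U.det = 1 ∨ U.det = -1) ∧
      ((castMat U)ᵀ * Q * castMat U).trace ≤ d * (4 / 3 : ℝ) ^ (d * (d - 1) / 2) :=
  stmt10_general d Q hQ
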